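/- arXiv:2303.07597 — 2 statements merged into one kernel-verified Lean document; each statement's English description precedes it below -/
import Mathlib

section
/- Let γ > 0, μ > 0 and f ∈ ℝ^g. Set f⁺ = (1/γ)[f]_+ and g* = max(1 − μ/‖f⁺‖₂, 0) · f⁺ (with g* = 0 when f⁺ = 0). Then g* maximizes g ↦ ⟨f, g⟩ − γ((1/2)‖g‖₂² + μ‖g‖₂) over the set of componentwise nonnegative vectors g ∈ ℝ^g; i.e., for every g ∈ ℝ^g with g ≥ 0 componentwise, ⟨f, g⟩ − γ((1/2)‖g‖₂² + μ‖g‖₂) ≤ ⟨f, g*⟩ − γ((1/2)‖g*‖₂² + μ‖g*‖₂). -/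
open scoped RealInnerProductSpace

/-- Componentwise positive part `[x]₊ i = max (x i) 0`. -/
noncomputable def posPart {g : ℕ} (x : EuclideanSpace ℝ (Fin g)) : EuclideanSpace ℝ (Fin g) :=
  WithLp.toLp 2 (fun i => max (x i) 0)

/-- Componentwise negative part `[x]₋ i = min (x i) 0`. -/
noncomputable def negPart {g : ℕ} (x : EuclideanSpace ℝ (Fin g)) : EuclideanSpace ℝ (Fin g) :=
  WithLp.toLp 2 (fun i => min (x i) 0)

/-- The all-ones vector `1_g`. -/
noncomputable def ones (g : ℕ) : EuclideanSpace ℝ (Fin g) := WithLp.toLp 2 (fun _ => 1)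

/-- the soft-thresholded point `g*` maximizes
`g ↦ ⟨f, g⟩ − γ((1/2)‖g‖² + μ‖g‖)` over the nonnegative orthant. -/
theorem soft_threshold_max_conjugate (g : ℕ) (γ μ : ℝ) (hγ : 0 < γ) (hμ : 0 < μ)
    (f : EuclideanSpace ℝ (Fin g))
    (fplus gstar : EuclideanSpace ℝ (Fin g))
    (hfplus : fplus = (1 / γ) • posPart f)
    (hstar : gstar = (max (1 - μ / ‖fplus‖) 0) • fplus) :
    ∀ x : EuclideanSpace ℝ (Fin g), (∀ i, 0 ≤ x i) →
      (@inner ℝ _ _ f x) - γ * ((1 / 2) * ‖x‖ ^ 2 + μ * ‖x‖) ≤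
        (@inner ℝ _ _ f gstar) - γ * ((1 / 2) * ‖gstar‖ ^ 2 + μ * ‖gstar‖) := by
  intro x hx
  set a := ‖fplus‖ with ha
  set c := max (1 - μ / a) 0 with hc
  have ha0 : 0 ≤ a := norm_nonneg _
  have hc0 : 0 ≤ c := le_max_right _ _
  have hγ' : γ ≠ 0 := ne_of_gt hγ
  have hfp : ∀ i, fplus i = (1 / γ) * max (f i) 0 := by
    intro i; rw [hfplus, PiLp.smul_apply, smul_eq_mul]; rfl
  -- ⟪f, fplus⟫ = γ * a ^ 2
  have hinner1 : ⟪f, fplus⟫ = γ * a ^ 2 := by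
    have h1 : ⟪f, fplus⟫ = ∑ i, f i * fplus i := by
      simp [PiLp.inner_apply, RCLike.inner_apply, mul_comm]
    have h2 : a ^ 2 = ∑ i, fplus i * fplus i := by
      rw [ha, EuclideanSpace.norm_sq_eq]
      simp only [Real.norm_eq_abs, sq_abs, sq, abs_mul_abs_self]
    rw [h1, h2, Finset.mul_sum]
    apply Finset.sum_congr rfl
    intro i _
    rw [hfp i]
    rcases le_or_gt (f i) 0 with h | h
    · rw [max_eq_right h]; ring
    · rw [max_eq_left h.le]; field_simp
  -- ⟪f, x⟫ ≤ γ * ⟪fplus, x⟫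
  have hinner2 : ⟪f, x⟫ ≤ γ * ⟪fplus, x⟫ := by
    have h1 : ⟪f, x⟫ = ∑ i, f i * x i := by
      simp [PiLp.inner_apply, RCLike.inner_apply, mul_comm]
    have h2 : ⟪fplus, x⟫ = ∑ i, fplus i * x i := by
      simp [PiLp.inner_apply, RCLike.inner_apply, mul_comm]
    rw [h1, h2, Finset.mul_sum]
    apply Finset.sum_le_sum
    intro i _
    rw [hfp i]
    have : γ * (1 / γ * max (f i) 0 * x i) = max (f i) 0 * x i := by
      field_simp
    rw [this]
    exact mul_le_mul_of_nonneg_right (le_max_left _ _) (hx i)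
  have hgnorm : ‖gstar‖ = c * a := by
    rw [hstar, norm_smul, Real.norm_eq_abs, abs_of_nonneg hc0]
  have hginner : ⟪f, gstar⟫ = c * (γ * a ^ 2) := by
    rw [hstar, real_inner_smul_right, hinner1]
  -- facts about s = c * a
  have hs0 : 0 ≤ c * a := mul_nonneg hc0 ha0
  have hs1 : a - μ ≤ c * a := by
    rcases eq_or_lt_of_le ha0 with h | h
    · nlinarith
    · have : 1 - μ / a ≤ c := le_max_left _ _
      have := mul_le_mul_of_nonneg_right this (le_of_lt h)
      calc a - μ = (1 - μ / a) * a := by field_simp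
        _ ≤ c * a := this
  have hs2 : (c * a) * ((c * a) - (a - μ)) = 0 := by
    rcases eq_or_lt_of_le ha0 with h | h
    · rw [← h]; ring
    · rcases le_or_gt (1 - μ / a) 0 with h2 | h2
      · rw [hc, max_eq_right h2]; ring
      · rw [hc, max_eq_left h2.le]
        have : (1 - μ / a) * a = a - μ := by field_simp
        rw [this]; ring
  have cs : ⟪fplus, x⟫ ≤ a * ‖x‖ := real_inner_le_norm _ _
  have ht : 0 ≤ ‖x‖ := norm_nonneg x
  rw [hgnorm, hginner]
  set t := ‖x‖
  have step1 : ⟪f, x⟫ - γ * ((1 / 2) * t ^ 2 + μ * t) ≤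
      γ * (a * t) - γ * ((1 / 2) * t ^ 2 + μ * t) := by
    have := mul_le_mul_of_nonneg_left cs hγ.le
    linarith
  refine step1.trans ?_
  nlinarith [mul_nonneg hγ.le (sq_nonneg (c * a - t)),
    mul_nonneg hγ.le (mul_nonneg (sub_nonneg.2 hs1) ht),
    mul_pos hγ hμ, hs2, sq_nonneg (c * a - t)]
end

section
/- Let α, α̃, c ∈ ℝ^g be vectors and β, β̃ ∈ ℝ be scalars, and set Δα = α − α̃ and Δβ = β − β̃. Then ‖[α + β·1_g − c]_+‖₂ ≤ ‖[α̃ + β̃·1_g − c]_+‖₂ + ‖[Δα]_+‖₂ + √g · max(Δβ, 0). -/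
open scoped RealInnerProductSpace

lemma norm_le_of_abs_le' {g : ℕ} (u v : EuclideanSpace ℝ (Fin g))
    (h : ∀ i, |u i| ≤ |v i|) : ‖u‖ ≤ ‖v‖ := by
  rw [EuclideanSpace.norm_eq, EuclideanSpace.norm_eq]
  simp only [Real.norm_eq_abs]
  apply Real.sqrt_le_sqrt
  apply Finset.sum_le_sum
  intro i _
  exact pow_le_pow_left₀ (abs_nonneg _) (h i) 2

/-- Lemma 1, Upper Bound:
`‖[α + β·1_g − c]₊‖₂ ≤ ‖[α̃ + β̃·1_g − c]₊‖₂ + ‖[Δα]₊‖₂ + √g·[Δβ]₊`. -/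
theorem upper_bound (g : ℕ) (α αt c : EuclideanSpace ℝ (Fin g)) (β βt : ℝ) :
    ‖posPart (α + β • ones g - c)‖ ≤
      ‖posPart (αt + βt • ones g - c)‖ + ‖posPart (α - αt)‖ +
        Real.sqrt g * max (β - βt) 0 := by
  have hsplit : α + β • ones g - c
      = (αt + βt • ones g - c) + (α - αt) + (β - βt) • ones g := by
    rw [sub_smul]; abel
  set a := αt + βt • ones g - c
  set b := α - αt
  set d := (β - βt) • ones g
  have h1 : ‖posPart (α + β • ones g - c)‖ ≤ ‖posPart a + posPart b + posPart d‖ := by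
    apply norm_le_of_abs_le'
    intro i
    have hval : (posPart a + posPart b + posPart d) i
        = max (a i) 0 + max (b i) 0 + max (d i) 0 := rfl
    rw [hsplit]
    have h0 : (0:ℝ) ≤ max (a i) 0 + max (b i) 0 + max (d i) 0 := by positivity
    rw [hval, abs_of_nonneg (le_max_right _ _), abs_of_nonneg h0]
    have : (a + b + d) i = a i + b i + d i := rfl
    show max ((a + b + d) i) 0 ≤ _
    rw [this]
    apply max_le _ h0
    gcongr <;> exact le_max_left _ _
  have h2 : ‖posPart d‖ = Real.sqrt g * max (β - βt) 0 := by
    have : ∀ i, posPart d i = max (β - βt) 0 := by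
      intro i
      show max ((β - βt) • ones g i) 0 = _
      simp [ones, smul_eq_mul]
    rw [EuclideanSpace.norm_eq]
    simp only [Real.norm_eq_abs]
    have hsum : ∑ i : Fin g, |posPart d i| ^ 2 = g * max (β - βt) 0 ^ 2 := by
      simp [this, abs_of_nonneg (le_max_right (β - βt) 0)]
    rw [hsum, Real.sqrt_mul (by positivity), Real.sqrt_sq (le_max_right _ _)]
  calc ‖posPart (α + β • ones g - c)‖ ≤ ‖posPart a + posPart b + posPart d‖ := h1
    _ ≤ ‖posPart a‖ + ‖posPart b‖ + ‖posPart d‖ := norm_add₃_le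
    _ = _ := by rw [h2]
end
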